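/- arXiv:1802.05972 — 2 statements merged into one kernel-verified Lean document; each statement's English description precedes it below -/
import Mathlib

section
/- Let P(t,z) = (λt, f(t,z)) be a local skew product, holomorphic in a neighborhood of (0,0) in ℂ², with 0 < |λ| < 1, fixed point P(0,0) = (0,0), and |p′(0)| = 1 where p(z) = f(0,z). Then there exist δ > 0 and a holomorphic function φ on {|t| < δ} such that φ(0) = 0 and f(t, φ(t)) = φ(λt) for all |t| < δ; i.e., the graph of φ is a local stable manifold through the origin in the horizontal direction. -/
open Metric Filter Set

open Topology

noncomputable section

/-- The maps `F n` diverge uniformly to infinity on compact subsets of `U`,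
i.e. they converge, locally uniformly on `U`, to the point at infinity of the
one-point compactification of `E`. -/
def DivergesOnCompacts {α E : Type*} [TopologicalSpace α] [NormedAddCommGroup E]
    (F : ℕ → α → E) (U : Set α) : Prop :=
  ∀ K : Set α, K ⊆ U → IsCompact K → ∀ C : ℝ, ∀ᶠ n in Filter.atTop, ∀ x ∈ K, C ≤ ‖F n x‖

/-- A family of maps is normal on `U`: every subsequence admits a further subsequence
which either converges locally uniformly on `U`, or diverges locally uniformly on `U`
to the point at infinity of the one-point compactification. -/
def NormalFamilyOn {α E : Type*} [TopologicalSpace α] [NormedAddCommGroup E]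
    (F : ℕ → α → E) (U : Set α) : Prop :=
  ∀ s : ℕ → ℕ, StrictMono s → ∃ t : ℕ → ℕ, StrictMono t ∧
    ((∃ g : α → E, TendstoLocallyUniformlyOn (fun n => F (s (t n))) g Filter.atTop U) ∨
      DivergesOnCompacts (fun n => F (s (t n))) U)

/-- The Fatou set of a self-map `g` relative to a forward invariant domain `D`:
the set of points of `D` having an open neighbourhood inside `D` on which
the family of iterates of `g` is normal. -/
def fatouSetOn {E : Type*} [NormedAddCommGroup E] (g : E → E) (D : Set E) : Set E :=
  {x | x ∈ D ∧ ∃ U : Set E, IsOpen U ∧ x ∈ U ∧ U ⊆ D ∧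
    NormalFamilyOn (fun n y => g^[n] y) U}

/-- The Fatou set of a self-map: the largest open set on which the iterates form
a normal family. -/
def fatouSet {E : Type*} [NormedAddCommGroup E] (g : E → E) : Set E :=
  fatouSetOn g Set.univ

/-- The Julia set of a self-map: the complement of the Fatou set. -/
def juliaSet {E : Type*} [NormedAddCommGroup E] (g : E → E) : Set E :=
  (fatouSet g)ᶜ


/-- Directional derivative of a jointly differentiable function on an open set in `ℂ²`
is (jointly) continuous. -/
lemma fderiv_apply_continuousAt {f : ℂ × ℂ → ℂ} {U : Set (ℂ × ℂ)} (hU : IsOpen U)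
    (hf : DifferentiableOn ℂ f U) (v : ℂ × ℂ) {x₀ : ℂ × ℂ} (hx₀ : x₀ ∈ U) :
    ContinuousAt (fun x => fderiv ℂ f x v) x₀ := by
  obtain ⟨ε₁, hε₁, hball₁⟩ := (Metric.nhds_basis_closedBall.mem_iff).1 (hU.mem_nhds hx₀)
  set ε : ℝ := ε₁ / (2 * (1 + ‖v‖)) with hεdef
  have hv0 : (0:ℝ) < 1 + ‖v‖ := by positivity
  have hε : 0 < ε := by positivity
  have hεsum : ε + ε * ‖v‖ ≤ ε₁ := by
    have : ε * (1 + ‖v‖) = ε₁ / 2 := by rw [hεdef]; field_simp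
    nlinarith
  set K : Set (ℂ × ℂ) := closedBall x₀ (ε + ε * ‖v‖) with hKdef
  have hKU : K ⊆ U := fun y hy => hball₁ (closedBall_subset_closedBall hεsum hy)
  have hin : ∀ x ∈ closedBall x₀ ε, ∀ s ∈ ball (0:ℂ) ε, x + s • v ∈ K := by
    intro x hx s hs
    have h1 : dist (x + s • v) x₀ ≤ dist (x + s • v) x + dist x x₀ := dist_triangle _ _ _
    have h2 : dist (x + s • v) x = ‖s‖ * ‖v‖ := by
      rw [dist_eq_norm]; simp [norm_smul]
    have hs' : ‖s‖ < ε := by simpa [mem_ball, dist_eq_norm] using hs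
    have : dist (x + s • v) x₀ ≤ ε + ε * ‖v‖ := by
      have hxd : dist x x₀ ≤ ε := by simpa [mem_closedBall] using hx
      have : ‖s‖ * ‖v‖ ≤ ε * ‖v‖ := by
        apply mul_le_mul_of_nonneg_right hs'.le (norm_nonneg _)
      nlinarith [h1, h2]
    simpa [hKdef, mem_closedBall] using this
  -- slices
  have hkey : ∀ x ∈ U, deriv (fun s : ℂ => f (x + s • v)) 0 = fderiv ℂ f x v := by
    intro x hx
    have h1 : HasDerivAt (fun s : ℂ => x + s • v) v 0 := by
      simpa using ((hasDerivAt_id (0:ℂ)).smul_const v).const_add x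
    have hfd : HasFDerivAt f (fderiv ℂ f x) x :=
      (hf.differentiableAt (hU.mem_nhds hx)).hasFDerivAt
    have hfd' : HasFDerivAt f (fderiv ℂ f x) ((fun s : ℂ => x + s • v) 0) := by
      simpa using hfd
    exact (hfd'.comp_hasDerivAt 0 h1).deriv
  rw [ContinuousAt]
  rw [tendsto_iff_seq_tendsto]
  intro xs hxs
  have hmem : ∀ᶠ n in atTop, xs n ∈ closedBall x₀ ε := hxs (closedBall_mem_nhds x₀ hε)
  set F : ℕ → ℂ → ℂ := fun n s => f (xs n + s • v) with hF
  set u : ℂ → ℂ := fun s => f (x₀ + s • v) with hu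
  have hdiffslice : ∀ x ∈ closedBall x₀ ε, DifferentiableOn ℂ (fun s : ℂ => f (x + s • v))
      (ball (0:ℂ) ε) := by
    intro x hx s hs
    have : DifferentiableAt ℂ (fun s : ℂ => f (x + s • v)) s := by
      have hxin : x + s • v ∈ U := hKU (hin x hx s hs)
      have h1 : DifferentiableAt ℂ (fun s : ℂ => x + s • v) s :=
        (differentiableAt_id.smul_const v).const_add x
      exact (hf.differentiableAt (hU.mem_nhds hxin)).comp s h1
    exact this.differentiableWithinAt
  have hFdiff : ∀ᶠ n in atTop, DifferentiableOn ℂ (F n) (ball (0:ℂ) ε) :=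
    hmem.mono fun n hn => hdiffslice _ hn
  have hcont : ContinuousOn f K := hf.continuousOn.mono hKU
  have hucont := (isCompact_closedBall x₀ _).uniformContinuousOn_of_continuous hcont
  have htuo : TendstoUniformlyOn F u atTop (ball (0:ℂ) ε) := by
    rw [Metric.tendstoUniformlyOn_iff]
    intro ε' hε'
    obtain ⟨δ', hδ', hδ'P⟩ := (Metric.uniformContinuousOn_iff).1 hucont ε' hε'
    have hclose : ∀ᶠ n in atTop, dist (xs n) x₀ < δ' :=
      (Metric.tendsto_nhds.mp hxs) δ' hδ'
    filter_upwards [hmem, hclose] with n hn hdn s hs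
    have hx0K : x₀ + s • v ∈ K := hin x₀ (mem_closedBall_self hε.le) s hs
    have hxnK : xs n + s • v ∈ K := hin _ hn s hs
    have hd : dist (x₀ + s • v) (xs n + s • v) = dist x₀ (xs n) := by
      simp [dist_eq_norm]
    exact hδ'P _ hx0K _ hxnK (by rw [hd]; exact (dist_comm (xs n) x₀ ▸ hdn))
  have hderiv := htuo.tendstoLocallyUniformlyOn.deriv hFdiff isOpen_ball
  have hder0 : Tendsto (fun n => deriv (F n) 0) atTop (𝓝 (deriv u 0)) := by
    have := hderiv.tendsto_at (mem_ball_self hε)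
    simpa using this
  have hsub : closedBall x₀ ε ⊆ U := fun y hy => hKU (by simpa using hin y hy 0 (mem_ball_self hε))
  have heq : (fun n => deriv (F n) 0) =ᶠ[atTop] (fun n => fderiv ℂ f (xs n) v) := by
    filter_upwards [hmem] with n hn
    exact hkey (xs n) (hsub hn)
  have hgoal : Tendsto (fun n => fderiv ℂ f (xs n) v) atTop (𝓝 (fderiv ℂ f x₀ v)) := by
    have h2 : deriv u 0 = fderiv ℂ f x₀ v := hkey x₀ hx₀
    exact Tendsto.congr' heq (by simpa [h2] using hderiv.tendsto_at (mem_ball_self hε))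
  exact hgoal

/-- The invertible linear map `(u, z) ↦ (u, u*a + z*b)` on `ℂ²`, for `b ≠ 0`. -/
def vEquiv (a b : ℂ) (hb : b ≠ 0) : (ℂ × ℂ) ≃L[ℂ] (ℂ × ℂ) :=
  LinearEquiv.toContinuousLinearEquiv
    { toFun := fun p => (p.1, p.1 * a + p.2 * b)
      map_add' := by intro x y; simp [Prod.ext_iff]; ring
      map_smul' := by intro c x; simp [Prod.ext_iff, smul_eq_mul]; ring
      invFun := fun p => (p.1, (p.2 - p.1 * a) / b)
      left_inv := by intro p; simp [Prod.ext_iff]; field_simp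
      right_inv := by intro p; simp [Prod.ext_iff]; field_simp; ring }

@[simp] lemma vEquiv_apply (a b : ℂ) (hb : b ≠ 0) (p : ℂ × ℂ) :
    vEquiv a b hb p = (p.1, p.1 * a + p.2 * b) := rfl

@[simp] lemma vEquiv_symm_apply (a b : ℂ) (hb : b ≠ 0) (p : ℂ × ℂ) :
    (vEquiv a b hb).symm p = (p.1, (p.2 - p.1 * a) / b) := rfl

lemma clm_repr (L : (ℂ × ℂ) →L[ℂ] ℂ) (p : ℂ × ℂ) :
    L p = p.1 * L (1, 0) + p.2 * L (0, 1) := by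
  have hp : p = p.1 • ((1:ℂ), (0:ℂ)) + p.2 • ((0:ℂ), (1:ℂ)) := by
    simp [Prod.ext_iff]
  conv_lhs => rw [hp]
  rw [map_add, map_smul, map_smul, smul_eq_mul, smul_eq_mul]

/-- The iteration sequence for the graph transform. -/
def seqF (g : ℂ × ℂ → ℂ) (lam : ℂ) : ℕ → ℂ → ℂ
  | 0 => fun _ => 0
  | n + 1 => fun t => g (t, seqF g lam n (lam * t))

@[simp] lemma seqF_zero (g : ℂ × ℂ → ℂ) (lam : ℂ) (t : ℂ) : seqF g lam 0 t = 0 := rfl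

@[simp] lemma seqF_succ (g : ℂ × ℂ → ℂ) (lam : ℂ) (n : ℕ) (t : ℂ) :
    seqF g lam (n + 1) t = g (t, seqF g lam n (lam * t)) := rfl


set_option maxHeartbeats 2000000

/-- horizontal stable manifold through a fixed point with
neutral vertical multiplier. -/
theorem statement3 (lam : ℂ) (hlam0 : 0 < ‖lam‖) (hlam1 : ‖lam‖ < 1)
    (f : ℂ × ℂ → ℂ) (U : Set (ℂ × ℂ)) (hU : IsOpen U) (hU0 : ((0 : ℂ), (0 : ℂ)) ∈ U)
    (hf : DifferentiableOn ℂ f U)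
    (hfix : f (0, 0) = 0)
    (hmult : ‖deriv (fun z : ℂ => f (0, z)) 0‖ = 1) :
    ∃ δ : ℝ, 0 < δ ∧ ∃ φ : ℂ → ℂ, DifferentiableOn ℂ φ (Metric.ball (0 : ℂ) δ) ∧
      φ 0 = 0 ∧ ∀ t ∈ Metric.ball (0 : ℂ) δ, (t, φ t) ∈ U ∧ f (t, φ t) = φ (lam * t) := by
  classical
  set x₀ : ℂ × ℂ := ((0 : ℂ), (0 : ℂ)) with hx₀def
  have hd1 : ∀ {x : ℂ × ℂ}, x ∈ U → ContinuousAt (fun x => fderiv ℂ f x (1, 0)) x :=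
    fun hx => fderiv_apply_continuousAt hU hf (1, 0) hx
  have hd2 : ∀ {x : ℂ × ℂ}, x ∈ U → ContinuousAt (fun x => fderiv ℂ f x (0, 1)) x :=
    fun hx => fderiv_apply_continuousAt hU hf (0, 1) hx
  set a : ℂ × ℂ → ℂ := fun x => fderiv ℂ f x (1, 0) with ha
  set b : ℂ × ℂ → ℂ := fun x => fderiv ℂ f x (0, 1) with hb
  -- the vertical multiplier at the origin
  have hb0norm : ‖b x₀‖ = 1 := by
    have h1 : HasDerivAt (fun z : ℂ => ((0 : ℂ), z)) ((0 : ℂ), (1 : ℂ)) 0 :=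
      (hasDerivAt_const (0 : ℂ) (0 : ℂ)).prodMk (hasDerivAt_id 0)
    have hfd : HasFDerivAt f (fderiv ℂ f x₀) x₀ :=
      (hf.differentiableAt (hU.mem_nhds hU0)).hasFDerivAt
    have hfd' : HasFDerivAt f (fderiv ℂ f x₀) ((fun z : ℂ => ((0 : ℂ), z)) 0) := hfd
    have h2 : HasDerivAt (fun z : ℂ => f (0, z)) (fderiv ℂ f x₀ (0, 1)) 0 :=
      hfd'.comp_hasDerivAt 0 h1
    show ‖fderiv ℂ f x₀ (0, 1)‖ = 1
    rw [← h2.deriv]; exact hmult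
  have hb0 : b x₀ ≠ 0 := by
    intro h; rw [h] at hb0norm; simp at hb0norm
  -- the skew product map P
  set P : ℂ × ℂ → ℂ × ℂ := fun x => (x.1, f x) with hPdef
  have hDP : ∀ x ∈ U,
      HasFDerivAt P ((ContinuousLinearMap.fst ℂ ℂ ℂ).prod (fderiv ℂ f x)) x := by
    intro x hx
    exact (hasFDerivAt_fst).prodMk (hf.differentiableAt (hU.mem_nhds hx)).hasFDerivAt
  -- continuity of the full derivative at the origin
  have hrepr : ∀ x ∈ U, fderiv ℂ f x
      = a x • (ContinuousLinearMap.fst ℂ ℂ ℂ) + b x • (ContinuousLinearMap.snd ℂ ℂ ℂ) := by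
    intro x hx
    apply ContinuousLinearMap.ext; intro p
    rw [clm_repr (fderiv ℂ f x) p]
    simp [ha, hb]
    ring
  have hfderiv_cont : ContinuousAt (fderiv ℂ f) x₀ := by
    have hc : ContinuousAt (fun x => a x • (ContinuousLinearMap.fst ℂ ℂ ℂ)
        + b x • (ContinuousLinearMap.snd ℂ ℂ ℂ)) x₀ :=
      ((hd1 hU0).smul continuousAt_const).add ((hd2 hU0).smul continuousAt_const)
    exact hc.congr (Filter.eventuallyEq_of_mem (hU.mem_nhds hU0) fun x hx => (hrepr x hx).symm)
  have hDPcont : ContinuousAt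
      (fun x => (ContinuousLinearMap.fst ℂ ℂ ℂ).prod (fderiv ℂ f x)) x₀ := by
    have hcprod : Continuous fun q : (((ℂ × ℂ) →L[ℂ] ℂ) × ((ℂ × ℂ) →L[ℂ] ℂ)) =>
        q.1.prod q.2 := (ContinuousLinearMap.prodₗᵢ ℂ).continuous
    exact hcprod.continuousAt.comp (continuousAt_const.prodMk hfderiv_cont)
  -- derivative of P as an equivalence, at points where b ≠ 0
  have hEeqx : ∀ x ∈ U, ∀ hbx : b x ≠ 0,
      ((vEquiv (a x) (b x) hbx : (ℂ × ℂ) ≃L[ℂ] ℂ × ℂ) : (ℂ × ℂ) →L[ℂ] ℂ × ℂ)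
        = (ContinuousLinearMap.fst ℂ ℂ ℂ).prod (fderiv ℂ f x) := by
    intro x hx hbx
    apply ContinuousLinearMap.ext; intro p
    have := clm_repr (fderiv ℂ f x) p
    show (p.1, p.1 * a x + p.2 * b x) = (p.1, fderiv ℂ f x p)
    rw [this]
  have hstrict : HasStrictFDerivAt P
      ((vEquiv (a x₀) (b x₀) hb0 : (ℂ × ℂ) ≃L[ℂ] ℂ × ℂ) : (ℂ × ℂ) →L[ℂ] ℂ × ℂ) x₀ := by
    rw [hEeqx x₀ hU0 hb0]
    exact hasStrictFDerivAt_of_hasFDerivAt_of_continuousAt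
      (Filter.eventually_of_mem (hU.mem_nhds hU0) fun x hx => hDP x hx) hDPcont
  -- the local inverse
  set Φ := hstrict.toOpenPartialHomeomorph P with hΦdef
  have hΦcoe : ⇑Φ = P := hstrict.toOpenPartialHomeomorph_coe
  have hx₀src : x₀ ∈ Φ.source := hstrict.mem_toOpenPartialHomeomorph_source
  have hPx₀ : P x₀ = x₀ := by
    have hfix' : f x₀ = 0 := hfix
    show (x₀.1, f x₀) = x₀
    rw [hfix']
  have hx₀tgt : x₀ ∈ Φ.target := by
    have := Φ.map_source hx₀src
    rwa [hΦcoe, hPx₀] at this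
  have hsymm0 : Φ.symm x₀ = x₀ := by
    have := Φ.left_inv hx₀src
    rwa [hΦcoe, hPx₀] at this
  set g : ℂ × ℂ → ℂ := fun y => (Φ.symm y).2 with hgdef
  have hg00 : g x₀ = 0 := by
    show (Φ.symm x₀).2 = 0
    rw [hsymm0]
  have hPsymm : ∀ y ∈ Φ.target, P (Φ.symm y) = y := by
    intro y hy
    have := Φ.right_inv hy
    rwa [hΦcoe] at this
  have hfst : ∀ y ∈ Φ.target, (Φ.symm y).1 = y.1 := by
    intro y hy
    have h := congrArg Prod.fst (hPsymm y hy)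
    exact h
  have hsymm_eq : ∀ y ∈ Φ.target, Φ.symm y = (y.1, g y) := fun y hy =>
    Prod.ext (hfst y hy) rfl
  have hfg : ∀ y ∈ Φ.target, f (y.1, g y) = y.2 := by
    intro y hy
    have h2 := congrArg Prod.snd (hPsymm y hy)
    rw [hsymm_eq y hy] at h2
    exact h2
  -- the good open sets
  have hbcont : ContinuousOn b U := fun x hx => (hd2 hx).continuousWithinAt
  have hacont : ContinuousOn a U := fun x hx => (hd1 hx).continuousWithinAt
  set S : Set (ℂ × ℂ) := U ∩ b ⁻¹' {0}ᶜ with hSdef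
  have hSopen : IsOpen S := hbcont.isOpen_inter_preimage hU isOpen_compl_singleton
  set V : Set (ℂ × ℂ) := Φ.target ∩ ⇑Φ.symm ⁻¹' (Φ.source ∩ S) with hVdef
  have hVopen : IsOpen V :=
    Φ.continuousOn_symm.isOpen_inter_preimage Φ.open_target (Φ.open_source.inter hSopen)
  have h0V : x₀ ∈ V := by
    refine ⟨hx₀tgt, ?_⟩
    rw [mem_preimage, hsymm0]
    exact ⟨hx₀src, hU0, hb0⟩
  have hVsub : ∀ y ∈ V, Φ.symm y ∈ U ∧ b (Φ.symm y) ≠ 0 := by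
    intro y hy
    obtain ⟨-, hy2⟩ := hy
    rw [mem_preimage] at hy2
    exact ⟨hy2.2.1, hy2.2.2⟩
  -- derivative of Φ.symm on V
  have hΦsymm_deriv : ∀ y ∈ V, ∃ hb' : b (Φ.symm y) ≠ 0,
      HasFDerivAt (⇑Φ.symm)
        (((vEquiv (a (Φ.symm y)) (b (Φ.symm y)) hb').symm : (ℂ × ℂ) ≃L[ℂ] ℂ × ℂ)
          : (ℂ × ℂ) →L[ℂ] ℂ × ℂ) y := by
    intro y hy
    obtain ⟨hyU, hby⟩ := hVsub y hy
    refine ⟨hby, ?_⟩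
    have hyT : y ∈ Φ.target := hy.1
    have hcont : ContinuousAt (⇑Φ.symm) y :=
      Φ.continuousOn_symm.continuousAt (Φ.open_target.mem_nhds hyT)
    have hPd : HasFDerivAt P
        ((vEquiv (a (Φ.symm y)) (b (Φ.symm y)) hby : (ℂ × ℂ) ≃L[ℂ] ℂ × ℂ)
          : (ℂ × ℂ) →L[ℂ] ℂ × ℂ) (Φ.symm y) := by
      rw [hEeqx _ hyU hby]
      exact hDP _ hyU
    have hev : ∀ᶠ y' in 𝓝 y, P (Φ.symm y') = y' :=
      Filter.eventually_of_mem (Φ.open_target.mem_nhds hyT) hPsymm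
    exact HasFDerivAt.of_local_left_inverse hcont hPd hev
  -- constants
  set L : ℝ := (1 + ‖lam‖⁻¹) / 2 with hLdef
  have hlaminv : 1 < ‖lam‖⁻¹ := (one_lt_inv₀ hlam0).2 hlam1
  have hL1 : 1 < L := by rw [hLdef]; linarith
  have hL0 : 0 < L := lt_trans one_pos hL1
  set M : ℝ := ‖a x₀ / b x₀‖ + 1 with hMdef
  have hM0 : 0 < M := by positivity
  set dg1 : ℂ × ℂ → ℂ := fun y => -(a (Φ.symm y) / b (Φ.symm y)) with hdg1
  set dg2 : ℂ × ℂ → ℂ := fun y => (b (Φ.symm y))⁻¹ with hdg2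
  set W : Set (ℂ × ℂ) := V ∩ (fun y => (‖dg2 y‖, ‖dg1 y‖)) ⁻¹' (Iio L ×ˢ Iio M) with hWdef
  have hsymmV : ContinuousOn (⇑Φ.symm) V := Φ.continuousOn_symm.mono inter_subset_left
  have hmapsV : MapsTo (⇑Φ.symm) V U := fun y hy => (hVsub y hy).1
  have hbV : ContinuousOn (fun y => b (Φ.symm y)) V := ContinuousOn.comp hbcont hsymmV hmapsV
  have haV : ContinuousOn (fun y => a (Φ.symm y)) V := ContinuousOn.comp hacont hsymmV hmapsV
  have hbVne : ∀ y ∈ V, b (Φ.symm y) ≠ 0 := fun y hy => (hVsub y hy).2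
  have hdg2cont : ContinuousOn dg2 V := hbV.inv₀ hbVne
  have hdg1cont : ContinuousOn dg1 V := (haV.div hbV hbVne).neg
  have hWopen : IsOpen W :=
    ContinuousOn.isOpen_inter_preimage (hdg2cont.norm.prodMk hdg1cont.norm) hVopen
      (isOpen_Iio.prod isOpen_Iio)
  have hWmem : ∀ y, y ∈ W ↔ y ∈ V ∧ ‖dg2 y‖ < L ∧ ‖dg1 y‖ < M := by
    intro y
    rw [hWdef, mem_inter_iff, mem_preimage, Set.mem_prod, mem_Iio, mem_Iio]
  have h0W : x₀ ∈ W := by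
    rw [hWmem]
    refine ⟨h0V, ?_, ?_⟩
    · show ‖(b (Φ.symm x₀))⁻¹‖ < L
      rw [hsymm0, norm_inv, hb0norm, inv_one]
      exact hL1
    · show ‖-(a (Φ.symm x₀) / b (Φ.symm x₀))‖ < M
      rw [hsymm0, norm_neg, hMdef]
      linarith
  obtain ⟨r, hr0, hrW⟩ : ∃ r > 0, closedBall x₀ r ⊆ W := by
    rcases Metric.nhds_basis_closedBall.mem_iff.1 (hWopen.mem_nhds h0W) with ⟨r, hr0, hr⟩
    exact ⟨r, hr0, hr⟩
  -- slice derivatives of g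
  have hder2 : ∀ y ∈ W, HasDerivAt (fun w : ℂ => g (y.1, w)) (dg2 y) y.2 := by
    intro y hy
    have hyV : y ∈ V := ((hWmem y).1 hy).1
    obtain ⟨hb', hF⟩ := hΦsymm_deriv y hyV
    have hg' : HasFDerivAt g ((ContinuousLinearMap.snd ℂ ℂ ℂ).comp
        (((vEquiv (a (Φ.symm y)) (b (Φ.symm y)) hb').symm : (ℂ × ℂ) ≃L[ℂ] ℂ × ℂ) :
          (ℂ × ℂ) →L[ℂ] ℂ × ℂ)) y := hF.snd
    have hinner : HasDerivAt (fun w : ℂ => (y.1, w)) ((0 : ℂ), (1 : ℂ)) y.2 :=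
      (hasDerivAt_const _ _).prodMk (hasDerivAt_id _)
    have hcomp := hg'.comp_hasDerivAt y.2 hinner
    have hval : ((ContinuousLinearMap.snd ℂ ℂ ℂ).comp
        (((vEquiv (a (Φ.symm y)) (b (Φ.symm y)) hb').symm : (ℂ × ℂ) ≃L[ℂ] ℂ × ℂ) :
          (ℂ × ℂ) →L[ℂ] ℂ × ℂ)) ((0 : ℂ), (1 : ℂ)) = dg2 y := by
      show ((1 : ℂ) - 0 * a (Φ.symm y)) / b (Φ.symm y) = (b (Φ.symm y))⁻¹
      rw [zero_mul, sub_zero, one_div]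
    rw [hval] at hcomp
    exact hcomp
  have hder1 : ∀ y ∈ W, HasDerivAt (fun t' : ℂ => g (t', y.2)) (dg1 y) y.1 := by
    intro y hy
    have hyV : y ∈ V := ((hWmem y).1 hy).1
    obtain ⟨hb', hF⟩ := hΦsymm_deriv y hyV
    have hg' : HasFDerivAt g ((ContinuousLinearMap.snd ℂ ℂ ℂ).comp
        (((vEquiv (a (Φ.symm y)) (b (Φ.symm y)) hb').symm : (ℂ × ℂ) ≃L[ℂ] ℂ × ℂ) :
          (ℂ × ℂ) →L[ℂ] ℂ × ℂ)) y := hF.snd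
    have hinner : HasDerivAt (fun t' : ℂ => (t', y.2)) ((1 : ℂ), (0 : ℂ)) y.1 :=
      (hasDerivAt_id _).prodMk (hasDerivAt_const _ _)
    have hcomp := hg'.comp_hasDerivAt y.1 hinner
    have hval : ((ContinuousLinearMap.snd ℂ ℂ ℂ).comp
        (((vEquiv (a (Φ.symm y)) (b (Φ.symm y)) hb').symm : (ℂ × ℂ) ≃L[ℂ] ℂ × ℂ) :
          (ℂ × ℂ) →L[ℂ] ℂ × ℂ)) ((1 : ℂ), (0 : ℂ)) = dg1 y := by
      show ((0 : ℂ) - 1 * a (Φ.symm y)) / b (Φ.symm y) = -(a (Φ.symm y) / b (Φ.symm y))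
      rw [zero_sub, one_mul, neg_div]
    rw [hval] at hcomp
    exact hcomp
  -- membership helper
  have hmemW : ∀ t w : ℂ, ‖t‖ ≤ r → ‖w‖ ≤ r → (t, w) ∈ W := by
    intro t w ht hw
    apply hrW
    rw [mem_closedBall, Prod.dist_eq]
    exact max_le (by simpa [dist_eq_norm, hx₀def] using ht) (by simpa [dist_eq_norm, hx₀def] using hw)
  -- Lipschitz bounds via the mean value inequality
  have hgLip : ∀ t : ℂ, ‖t‖ ≤ r → ∀ w₁ : ℂ, ‖w₁‖ ≤ r → ∀ w₂ : ℂ, ‖w₂‖ ≤ r →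
      ‖g (t, w₁) - g (t, w₂)‖ ≤ L * ‖w₁ - w₂‖ := by
    intro t ht w₁ hw₁ w₂ hw₂
    have h := Convex.norm_image_sub_le_of_norm_hasDerivWithin_le
      (f := fun w => g (t, w)) (f' := fun w => dg2 (t, w)) (s := closedBall (0 : ℂ) r)
      (fun w hw => (hder2 (t, w) (hmemW t w ht (mem_closedBall_zero_iff.1 hw))).hasDerivWithinAt)
      (fun w hw => le_of_lt (((hWmem _).1 (hmemW t w ht (mem_closedBall_zero_iff.1 hw))).2.1))
      (convex_closedBall _ _) (mem_closedBall_zero_iff.2 hw₂) (mem_closedBall_zero_iff.2 hw₁)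
    exact h
  have hgM : ∀ t : ℂ, ‖t‖ ≤ r → ‖g (t, 0)‖ ≤ M * ‖t‖ := by
    intro t ht
    have h0r : ‖(0:ℂ)‖ ≤ r := by simp [hr0.le]
    have h := Convex.norm_image_sub_le_of_norm_hasDerivWithin_le
      (f := fun t' => g (t', 0)) (f' := fun t' => dg1 (t', 0)) (s := closedBall (0 : ℂ) r)
      (fun t' ht' => (hder1 (t', 0)
        (hmemW t' 0 (mem_closedBall_zero_iff.1 ht') h0r)).hasDerivWithinAt)
      (fun t' ht' => le_of_lt (((hWmem _).1
        (hmemW t' 0 (mem_closedBall_zero_iff.1 ht') h0r)).2.2))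
      (convex_closedBall _ _) (mem_closedBall_zero_iff.2 h0r)
      (mem_closedBall_zero_iff.2 ht)
    have hg0 : g (0 : ℂ × ℂ) = 0 := hg00
    simpa [hg0, show g ((0:ℂ), (0:ℂ)) = 0 from hg00] using h
  -- geometric constants
  have hne : ‖lam‖ ≠ 0 := ne_of_gt hlam0
  obtain ⟨k, hkdef⟩ : ∃ k : ℝ, k = L * ‖lam‖ := ⟨_, rfl⟩
  have hk0 : 0 ≤ k := by rw [hkdef]; positivity
  have hk1 : k < 1 := by
    rw [hkdef, hLdef, div_mul_eq_mul_div, add_mul, one_mul, inv_mul_cancel₀ hne]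
    linarith
  obtain ⟨R, hRdef⟩ : ∃ R : ℝ, R = M / (1 - k) := ⟨_, rfl⟩
  have h1k : (0:ℝ) < 1 - k := by linarith
  have hR0 : 0 < R := by rw [hRdef]; exact div_pos hM0 h1k
  have hRk : k * R + M = R := by
    rw [hRdef]
    field_simp
    ring
  obtain ⟨δ, hδdef⟩ : ∃ δ : ℝ, δ = r / (R + 1) := ⟨_, rfl⟩
  have hR1 : (0:ℝ) < R + 1 := by linarith
  have hδ0 : 0 < δ := by rw [hδdef]; exact div_pos hr0 hR1
  have hδr : δ ≤ r := by
    rw [hδdef, div_le_iff₀ hR1]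
    nlinarith
  have hRδ : R * δ ≤ r := by
    rw [hδdef, ← mul_div_assoc, div_le_iff₀ hR1]
    nlinarith
  -- the iteration
  obtain ⟨F, hFdef⟩ : ∃ F : ℕ → ℂ → ℂ, F = seqF g lam := ⟨_, rfl⟩
  have hF0 : ∀ t : ℂ, F 0 t = 0 := fun t => by rw [hFdef]; rfl
  have hFS : ∀ (n : ℕ) (t : ℂ), F (n + 1) t = g (t, F n (lam * t)) := by
    intro n t
    rw [hFdef]
    rfl
  have hnormmul : ∀ t : ℂ, ‖lam * t‖ = ‖lam‖ * ‖t‖ := fun t => norm_mul lam t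
  have hlamt : ∀ t : ℂ, ‖t‖ ≤ δ → ‖lam * t‖ ≤ δ := by
    intro t ht
    rw [hnormmul]
    calc ‖lam‖ * ‖t‖ ≤ 1 * ‖t‖ := mul_le_mul_of_nonneg_right hlam1.le (norm_nonneg t)
      _ = ‖t‖ := one_mul _
      _ ≤ δ := ht
  have hA : ∀ n, ∀ t : ℂ, ‖t‖ ≤ δ → ‖F n t‖ ≤ R * ‖t‖ := by
    intro n
    induction n with
    | zero => intro t ht; simp [hFdef]; positivity
    | succ n ih =>
      intro t ht
      have hlt := hlamt t ht
      have h1 := ih (lam * t) hlt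
      have hFr : ‖F n (lam * t)‖ ≤ r := by
        have h2 : R * ‖lam * t‖ ≤ R * δ := mul_le_mul_of_nonneg_left hlt hR0.le
        linarith
      have htr : ‖t‖ ≤ r := le_trans ht hδr
      have h0r : ‖(0:ℂ)‖ ≤ r := by simp [hr0.le]
      have hL' := hgLip t htr (F n (lam * t)) hFr 0 h0r
      have hM' := hgM t htr
      have hsplit : ‖g (t, F n (lam * t))‖ ≤ ‖g (t, F n (lam * t)) - g (t, 0)‖ + ‖g (t, 0)‖ := by
        have := norm_add_le (g (t, F n (lam * t)) - g (t, 0)) (g (t, 0))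
        simpa using this
      have h2 : ‖g (t, F n (lam * t)) - g (t, 0)‖ ≤ L * ‖F n (lam * t)‖ := by
        simpa using hL'
      have hfinal : ‖F (n + 1) t‖ ≤ L * ‖F n (lam * t)‖ + M * ‖t‖ := by
        rw [hFS]
        exact le_trans hsplit (add_le_add h2 hM')
      have h3 : L * ‖F n (lam * t)‖ ≤ L * (R * (‖lam‖ * ‖t‖)) := by
        apply mul_le_mul_of_nonneg_left _ hL0.le
        rw [← hnormmul]; exact h1
      calc ‖F (n + 1) t‖ ≤ L * (R * (‖lam‖ * ‖t‖)) + M * ‖t‖ := by linarith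
        _ = (k * R + M) * ‖t‖ := by rw [hkdef]; ring
        _ = R * ‖t‖ := by rw [hRk]
  have hFrb : ∀ n, ∀ t : ℂ, ‖t‖ ≤ δ → ‖F n t‖ ≤ r := by
    intro n t ht
    have h1 := hA n t ht
    have h2 : R * ‖t‖ ≤ R * δ := mul_le_mul_of_nonneg_left ht hR0.le
    linarith
  have hB : ∀ n, ∀ t : ℂ, ‖t‖ ≤ δ → ‖F (n + 1) t - F n t‖ ≤ M * k ^ n * ‖t‖ := by
    intro n
    induction n with
    | zero =>
      intro t ht
      have := hgM t (le_trans ht hδr)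
      simpa [hFdef] using this
    | succ n ih =>
      intro t ht
      have hlt := hlamt t ht
      have h1 := ih (lam * t) hlt
      have hF1r : ‖F (n + 1) (lam * t)‖ ≤ r := hFrb (n + 1) _ hlt
      have hF0r : ‖F n (lam * t)‖ ≤ r := hFrb n _ hlt
      have h2 := hgLip t (le_trans ht hδr) (F (n + 1) (lam * t)) hF1r (F n (lam * t)) hF0r
      rw [show F (n + 2) t = g (t, F (n + 1) (lam * t)) from hFS (n + 1) t,
        show F (n + 1) t = g (t, F n (lam * t)) from hFS n t]
      calc ‖g (t, F (n + 1) (lam * t)) - g (t, F n (lam * t))‖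
          ≤ L * ‖F (n + 1) (lam * t) - F n (lam * t)‖ := h2
        _ ≤ L * (M * k ^ n * ‖lam * t‖) := mul_le_mul_of_nonneg_left h1 hL0.le
        _ = M * k ^ (n + 1) * ‖t‖ := by rw [hnormmul t, hkdef]; ring
  have hC : ∀ n, ∀ t : ℂ, ‖t‖ ≤ δ → DifferentiableAt ℂ (F n) t := by
    intro n
    induction n with
    | zero =>
      intro t ht
      have hz : F 0 = fun _ : ℂ => (0 : ℂ) := funext hF0
      rw [hz]
      exact differentiableAt_const 0
    | succ n ih =>
      intro t ht
      have hlt := hlamt t ht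
      have hyW : (t, F n (lam * t)) ∈ W := hmemW t _ (le_trans ht hδr) (hFrb n _ hlt)
      have hyV : (t, F n (lam * t)) ∈ V := ((hWmem _).1 hyW).1
      obtain ⟨hb', hF'⟩ := hΦsymm_deriv _ hyV
      have hgd : DifferentiableAt ℂ g (t, F n (lam * t)) := hF'.differentiableAt.snd
      have hinner : DifferentiableAt ℂ (fun t' : ℂ => (t', F n (lam * t'))) t := by
        apply DifferentiableAt.prodMk differentiableAt_id
        exact DifferentiableAt.comp t (ih _ hlt) (differentiableAt_id.const_mul lam)
      have hFS' : F (n + 1) = fun t' : ℂ => g (t', F n (lam * t')) := by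
        funext t'
        rw [hFS]
      rw [hFS']
      exact DifferentiableAt.comp (g := g) (f := fun t' : ℂ => (t', F n (lam * t'))) t hgd hinner
  have hD : ∀ n, F n 0 = 0 := by
    intro n
    induction n with
    | zero => exact hF0 0
    | succ n ih =>
      rw [hFS, mul_zero, ih]
      exact hg00
  -- uniform convergence
  set u : ℕ → ℝ := fun n => M * δ * k ^ n with hudef
  have hu : Summable u := (summable_geometric_of_lt_one hk0 hk1).mul_left (M * δ)
  have hbound : ∀ (n : ℕ) (t : ℂ), t ∈ ball (0 : ℂ) δ → ‖F (n + 1) t - F n t‖ ≤ u n := by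
    intro n t ht
    have ht' : ‖t‖ ≤ δ := (mem_ball_zero_iff.1 ht).le
    have h1 := hB n t ht'
    have h2 : M * k ^ n * ‖t‖ ≤ M * k ^ n * δ := by
      apply mul_le_mul_of_nonneg_left ht'
      positivity
    calc ‖F (n + 1) t - F n t‖ ≤ M * k ^ n * δ := by linarith
      _ = u n := by rw [hudef]; ring
  have htsum := tendstoUniformlyOn_tsum_nat hu hbound
  set φ : ℂ → ℂ := fun t => ∑' n, (F (n + 1) t - F n t) with hφdef
  have hsumeq : (fun (N : ℕ) (t : ℂ) => ∑ n ∈ Finset.range N, (F (n + 1) t - F n t))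
      = fun (N : ℕ) (t : ℂ) => F N t := by
    funext N t
    rw [Finset.sum_range_sub (fun n => F n t) N, hF0, sub_zero]
  have htuo : TendstoUniformlyOn (fun (N : ℕ) (t : ℂ) => F N t) φ atTop (ball (0 : ℂ) δ) := by
    rw [← hsumeq]
    exact htsum
  have hφdiff : DifferentiableOn ℂ φ (ball (0 : ℂ) δ) := by
    apply htuo.tendstoLocallyUniformlyOn.differentiableOn ?_ isOpen_ball
    exact Filter.Eventually.of_forall fun n =>
      fun t ht => (hC n t (mem_ball_zero_iff.1 ht).le).differentiableWithinAt
  have hφ0 : φ 0 = 0 := by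
    rw [hφdef]
    simp [hD]
  have hlim : ∀ t ∈ ball (0 : ℂ) δ, Tendsto (fun n => F n t) atTop (𝓝 (φ t)) :=
    fun t ht => htuo.tendsto_at ht
  refine ⟨δ, hδ0, φ, hφdiff, hφ0, ?_⟩
  intro t ht
  have ht' : ‖t‖ < δ := mem_ball_zero_iff.1 ht
  have hltδ : ‖lam * t‖ ≤ δ := hlamt t ht'.le
  have hlt2 : ‖lam * t‖ < δ := by
    rw [hnormmul]
    have h3 : ‖lam‖ * ‖t‖ ≤ 1 * ‖t‖ := mul_le_mul_of_nonneg_right hlam1.le (norm_nonneg t)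
    rw [one_mul] at h3
    exact lt_of_le_of_lt h3 ht'
  have hltmem : lam * t ∈ ball (0 : ℂ) δ := mem_ball_zero_iff.2 hlt2
  have hwt := hlim (lam * t) hltmem
  have hwnorm : ‖φ (lam * t)‖ ≤ r :=
    le_of_tendsto hwt.norm (Filter.Eventually.of_forall fun n => hFrb n _ hltδ)
  have hyW : (t, φ (lam * t)) ∈ W := hmemW t _ (le_trans ht'.le hδr) hwnorm
  have hyV : (t, φ (lam * t)) ∈ V := ((hWmem _).1 hyW).1
  have hyT : (t, φ (lam * t)) ∈ Φ.target := hyV.1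
  have hyU : Φ.symm (t, φ (lam * t)) ∈ U := (hVsub _ hyV).1
  obtain ⟨hb', hF'⟩ := hΦsymm_deriv _ hyV
  have hgc : ContinuousAt g (t, φ (lam * t)) := hF'.differentiableAt.snd.continuousAt
  have h1 : Tendsto (fun n => F (n + 1) t) atTop (𝓝 (φ t)) :=
    (hlim t ht).comp (tendsto_add_atTop_nat 1)
  have h2 : Tendsto (fun n => g (t, F n (lam * t))) atTop (𝓝 (g (t, φ (lam * t)))) :=
    hgc.tendsto.comp (tendsto_const_nhds.prodMk_nhds hwt)
  have h1' : Tendsto (fun n => g (t, F n (lam * t))) atTop (𝓝 (φ t)) := by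
    simp only [hFS] at h1
    exact h1
  have hgy : φ t = g (t, φ (lam * t)) := tendsto_nhds_unique h1' h2
  have hgy' : g (t, φ (lam * t)) = φ t := hgy.symm
  have hsymm_y : Φ.symm (t, φ (lam * t)) = (t, φ t) := by
    rw [hsymm_eq _ hyT, hgy']
  constructor
  · exact hsymm_y ▸ hyU
  · have hfe := hfg _ hyT
    rw [hgy]
    exact hfe
end
end

section
/- Let P(t,z) = (λt, f(t,z)) be an attracting local polynomial skew product of vertical degree d, with Crit(P) = {(t,z) : ∂f/∂z(t,z) = 0}. There exist constants 0 < c < c_0 and δ_2 > 0 such that if a vertical disk Δ(x, r) ⊂ {t = t_0} satisfies Δ(x, r) ⊂ {|z| < R}, |t_0| < δ_2, and η := d(Δ(x, r), Crit(P) ∩ {t = t_0}) > 0, then P(Δ(x, r)) contains a vertical disk Δ(P(x), r′) ⊂ {t = λ t_0} of radius r′ ≥ c η^{2d−2} r. -/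
open Metric Filter Set Polynomial

noncomputable section

lemma prodNormGe (r : ℝ) (hr : 0 ≤ r) (L : Multiset ℝ) (h : ∀ x ∈ L, r ≤ x) :
    r ^ Multiset.card L ≤ L.prod := by
  induction L using Multiset.induction with
  | empty => simp
  | cons b s ih =>
    have hb := h b (Multiset.mem_cons_self b s)
    have hs := ih (fun x hx => h x (Multiset.mem_cons_of_mem hx))
    have h0 : (0:ℝ) ≤ r ^ Multiset.card s := pow_nonneg hr _
    simp only [Multiset.card_cons, Multiset.prod_cons, pow_succ]
    nlinarith

lemma evalProdNorm (z : ℂ) (M : Multiset ℂ) :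
    ‖Polynomial.eval z ((M.map (fun γ => X - C γ)).prod)‖
      = ((M.map (fun γ => ‖z - γ‖)).prod) := by
  induction M using Multiset.induction with
  | empty => simp
  | cons b s ih =>
    simp only [Multiset.map_cons, Multiset.prod_cons, eval_mul, eval_sub, eval_X, eval_C,
      norm_mul, ih]

lemma derivProdBound (z : ℂ) (r : ℝ) (hr : 0 ≤ r) (M : Multiset ℂ)
    (h : ∀ γ ∈ M, r ≤ ‖z - γ‖) :
    ‖Polynomial.eval z (Polynomial.derivative ((M.map (fun γ => X - C γ)).prod))‖ * r
      ≤ (Multiset.card M : ℝ) * ((M.map (fun γ => ‖z - γ‖)).prod) := by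
  induction M using Multiset.induction with
  | empty => simp
  | cons b s ih =>
    have hb := h b (Multiset.mem_cons_self b s)
    have IH := ih (fun γ hγ => h γ (Multiset.mem_cons_of_mem hγ))
    simp only [Multiset.map_cons, Multiset.prod_cons, Multiset.card_cons]
    rw [derivative_mul, derivative_sub, derivative_X, derivative_C, sub_zero, one_mul]
    have hP : ‖Polynomial.eval z ((s.map (fun γ => X - C γ)).prod)‖
        = (s.map (fun γ => ‖z - γ‖)).prod := evalProdNorm z s
    have hPnn : (0:ℝ) ≤ (s.map (fun γ => ‖z - γ‖)).prod :=
      Multiset.prod_nonneg (by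
        intro x hx
        obtain ⟨γ, _, rfl⟩ := Multiset.mem_map.mp hx
        exact norm_nonneg _)
    have htri : ‖Polynomial.eval z ((s.map (fun γ => X - C γ)).prod
          + (X - C b) * Polynomial.derivative ((s.map (fun γ => X - C γ)).prod))‖
        ≤ (s.map (fun γ => ‖z - γ‖)).prod
          + ‖z - b‖ * ‖Polynomial.eval z (Polynomial.derivative ((s.map (fun γ => X - C γ)).prod))‖ := by
      rw [eval_add, eval_mul, eval_sub, eval_X, eval_C]
      calc _ ≤ ‖Polynomial.eval z ((s.map (fun γ => X - C γ)).prod)‖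
            + ‖(z - b) * Polynomial.eval z (Polynomial.derivative ((s.map (fun γ => X - C γ)).prod))‖ :=
          norm_add_le _ _
        _ = _ := by rw [hP, norm_mul]
    have hDnn : (0:ℝ) ≤ ‖Polynomial.eval z (Polynomial.derivative ((s.map (fun γ => X - C γ)).prod))‖ :=
      norm_nonneg _
    push_cast
    nlinarith [norm_nonneg (z - b)]

lemma normEvalFactored (s : ℂ[X]) (hs : s ≠ 0) (z : ℂ) :
    ‖s.eval z‖ = ‖s.leadingCoeff‖ * ((s.roots.map (fun γ => ‖z - γ‖)).prod) := by
  conv_lhs => rw [Splits.eq_prod_roots (IsAlgClosed.splits s)]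
  rw [eval_mul, eval_C, norm_mul, evalProdNorm]

lemma cardRoots (s : ℂ[X]) : Multiset.card s.roots = s.natDegree :=
  (splits_iff_card_roots.mp (IsAlgClosed.splits s))

lemma key1 (s : ℂ[X]) (z : ℂ) (r : ℝ) (hr : 0 < r) (hs : s ≠ 0)
    (hlt : ‖s.eval z‖ < ‖s.leadingCoeff‖ * r ^ s.natDegree) :
    ∃ γ, s.eval γ = 0 ∧ ‖z - γ‖ < r := by
  by_contra hcon
  push_neg at hcon
  have hroots : ∀ x ∈ s.roots.map (fun γ => ‖z - γ‖), r ≤ x := by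
    intro x hx
    obtain ⟨γ, hγ, rfl⟩ := Multiset.mem_map.mp hx
    exact hcon γ (mem_roots'.mp hγ).2
  have hprod := prodNormGe r hr.le _ hroots
  rw [Multiset.card_map, cardRoots] at hprod
  have h2 := normEvalFactored s hs z
  have hL : 0 < ‖s.leadingCoeff‖ := norm_pos_iff.mpr (leadingCoeff_ne_zero.mpr hs)
  nlinarith

lemma key2 (s : ℂ[X]) (z : ℂ) (r B : ℝ) (hr : 0 < r) (hs : s ≠ 0) (hB : 0 < B)
    (hder : B ≤ ‖(Polynomial.derivative s).eval z‖)
    (hlt : (s.natDegree : ℝ) * ‖s.eval z‖ < B * r) :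
    ∃ γ, s.eval γ = 0 ∧ ‖z - γ‖ < r := by
  by_contra hcon
  push_neg at hcon
  have hroots : ∀ γ ∈ s.roots, r ≤ ‖z - γ‖ := by
    intro γ hγ
    exact hcon γ (mem_roots'.mp hγ).2
  have hfac := Splits.eq_prod_roots (IsAlgClosed.splits s)
  have hdfac : Polynomial.derivative s
      = C s.leadingCoeff * Polynomial.derivative ((s.roots.map (fun γ => X - C γ)).prod) := by
    conv_lhs => rw [hfac]
    rw [derivative_C_mul]
  have hbnd := derivProdBound z r hr.le s.roots hroots
  have h2 := normEvalFactored s hs z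
  have hL : 0 ≤ ‖s.leadingCoeff‖ := norm_nonneg _
  have hcard : (Multiset.card s.roots : ℝ) = (s.natDegree : ℝ) := by
    rw [cardRoots]
  have hderiv_eq : ‖(Polynomial.derivative s).eval z‖
      = ‖s.leadingCoeff‖ * ‖Polynomial.eval z (Polynomial.derivative ((s.roots.map (fun γ => X - C γ)).prod))‖ := by
    rw [hdfac, eval_mul, eval_C, norm_mul]
  have : B * r ≤ (s.natDegree : ℝ) * ‖s.eval z‖ := by
    calc B * r ≤ ‖(Polynomial.derivative s).eval z‖ * r :=
          mul_le_mul_of_nonneg_right hder hr.le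
      _ = ‖s.leadingCoeff‖ * (‖Polynomial.eval z (Polynomial.derivative ((s.roots.map (fun γ => X - C γ)).prod))‖ * r) := by
          rw [hderiv_eq]; ring
      _ ≤ ‖s.leadingCoeff‖ * ((Multiset.card s.roots : ℝ) * ((s.roots.map (fun γ => ‖z - γ‖)).prod)) :=
          mul_le_mul_of_nonneg_left hbnd hL
      _ = (Multiset.card s.roots : ℝ) * (‖s.leadingCoeff‖ * ((s.roots.map (fun γ => ‖z - γ‖)).prod)) := by ring
      _ = (s.natDegree : ℝ) * ‖s.eval z‖ := by rw [hcard, ← h2]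
  linarith

lemma evalNormLower (s : ℂ[X]) (hs : s ≠ 0) (z : ℂ) (η : ℝ) (hη : 0 ≤ η)
    (h : ∀ c, s.eval c = 0 → η ≤ ‖z - c‖) :
    ‖s.leadingCoeff‖ * η ^ s.natDegree ≤ ‖s.eval z‖ := by
  have hroots : ∀ x ∈ s.roots.map (fun γ => ‖z - γ‖), η ≤ x := by
    intro x hx
    obtain ⟨γ, hγ, rfl⟩ := Multiset.mem_map.mp hx
    exact h γ (mem_roots'.mp hγ).2
  have hprod := prodNormGe η hη _ hroots
  rw [Multiset.card_map, cardRoots] at hprod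
  rw [normEvalFactored s hs z]
  exact mul_le_mul_of_nonneg_left hprod (norm_nonneg _)

lemma existsSmallRoot (s : ℂ[X]) (hd : s.natDegree ≠ 0) (Q : ℝ)
    (hQ : ‖s.eval 0‖ ≤ Q * ‖s.leadingCoeff‖) :
    ∃ c, s.eval c = 0 ∧ ‖c‖ < max Q 1 + 1 := by
  have hs : s ≠ 0 := fun h => hd (by simp [h])
  by_contra hcon
  push_neg at hcon
  set B := max Q 1 + 1 with hBdef
  have hB1 : (1:ℝ) ≤ B := by
    have := le_max_right Q 1
    simp only [hBdef]; linarith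
  have hlow := evalNormLower s hs 0 B (by linarith) (by
    intro c hc
    have := hcon c hc
    simpa using this)
  have hpow : B ≤ B ^ s.natDegree := le_self_pow₀ hB1 hd
  have hL : 0 < ‖s.leadingCoeff‖ := norm_pos_iff.mpr (leadingCoeff_ne_zero.mpr hs)
  have hQB : Q < B := by
    have := le_max_left Q 1
    simp only [hBdef]; linarith
  nlinarith



def qpoly (d : ℕ) (a : ℕ → ℂ → ℂ) (t₀ : ℂ) : ℂ[X] :=
  ∑ i ∈ Finset.range (d + 1), C (a i t₀) * X ^ i

lemma qpoly_coeff (d : ℕ) (a : ℕ → ℂ → ℂ) (t₀ : ℂ) (j : ℕ) :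
    (qpoly d a t₀).coeff j = if j ≤ d then a j t₀ else 0 := by
  rw [qpoly, finset_sum_coeff]
  have : ∀ i ∈ Finset.range (d+1), (C (a i t₀) * X ^ i).coeff j
      = if j = i then a i t₀ else 0 := by
    intro i _
    rw [coeff_C_mul, coeff_X_pow]
    simp [mul_ite]
  rw [Finset.sum_congr rfl this, Finset.sum_ite_eq]
  simp [Nat.lt_succ_iff]

lemma qpoly_eval (d : ℕ) (a : ℕ → ℂ → ℂ) (t₀ : ℂ) (f : ℂ → ℂ → ℂ)
    (hf : ∀ t z, f t z = ∑ i ∈ Finset.range (d + 1), a i t * z ^ i) (w : ℂ) :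
    (qpoly d a t₀).eval w = f t₀ w := by
  rw [hf, qpoly, eval_finset_sum]
  simp

lemma qpoly_natDegree (d : ℕ) (a : ℕ → ℂ → ℂ) (t₀ : ℂ) (had : a d t₀ ≠ 0) :
    (qpoly d a t₀).natDegree = d := by
  refine le_antisymm (natDegree_le_iff_coeff_eq_zero.mpr fun m hm => ?_)
    (le_natDegree_of_ne_zero ?_)
  · rw [qpoly_coeff]; simp [Nat.not_le.mpr hm]
  · rw [qpoly_coeff]; simpa using had

lemma spoly_coeff_d (d : ℕ) (a : ℕ → ℂ → ℂ) (t₀ v : ℂ) (hd : 1 ≤ d) :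
    (qpoly d a t₀ - C v).coeff d = a d t₀ := by
  rw [coeff_sub, qpoly_coeff, coeff_C]
  have : d ≠ 0 := by omega
  simp [this]

lemma spoly_natDegree (d : ℕ) (a : ℕ → ℂ → ℂ) (t₀ v : ℂ) (hd : 1 ≤ d) (had : a d t₀ ≠ 0) :
    (qpoly d a t₀ - C v).natDegree = d := by
  refine le_antisymm (natDegree_le_iff_coeff_eq_zero.mpr fun m hm => ?_)
    (le_natDegree_of_ne_zero ?_)
  · rw [coeff_sub, qpoly_coeff, coeff_C]
    have h1 : ¬ m ≤ d := by omega
    have h2 : m ≠ 0 := by omega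
    simp [h1, h2]
  · rw [spoly_coeff_d d a t₀ v hd]; exact had

lemma spoly_ne_zero (d : ℕ) (a : ℕ → ℂ → ℂ) (t₀ v : ℂ) (hd : 1 ≤ d) (had : a d t₀ ≠ 0) :
    qpoly d a t₀ - C v ≠ 0 := by
  intro h
  apply had
  rw [← spoly_coeff_d d a t₀ v hd, h, coeff_zero]

lemma spoly_leadingCoeff (d : ℕ) (a : ℕ → ℂ → ℂ) (t₀ v : ℂ) (hd : 1 ≤ d) (had : a d t₀ ≠ 0) :
    (qpoly d a t₀ - C v).leadingCoeff = a d t₀ := by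
  rw [leadingCoeff, spoly_natDegree d a t₀ v hd had, spoly_coeff_d d a t₀ v hd]

lemma dq_coeff (d : ℕ) (a : ℕ → ℂ → ℂ) (t₀ : ℂ) (hd : 1 ≤ d) :
    (Polynomial.derivative (qpoly d a t₀)).coeff (d - 1) = a d t₀ * d := by
  rw [coeff_derivative, qpoly_coeff]
  have h1 : d - 1 + 1 = d := by omega
  rw [h1]
  simp only [le_refl, if_true]
  congr 1
  exact_mod_cast congrArg (Nat.cast : ℕ → ℂ) h1

lemma dq_natDegree (d : ℕ) (a : ℕ → ℂ → ℂ) (t₀ : ℂ) (hd : 1 ≤ d) (had : a d t₀ ≠ 0) :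
    (Polynomial.derivative (qpoly d a t₀)).natDegree = d - 1 := by
  refine le_antisymm ?_ (le_natDegree_of_ne_zero ?_)
  · calc (Polynomial.derivative (qpoly d a t₀)).natDegree
        ≤ (qpoly d a t₀).natDegree - 1 := natDegree_derivative_le _
      _ = d - 1 := by rw [qpoly_natDegree d a t₀ had]
  · rw [dq_coeff d a t₀ hd]
    have : (d : ℂ) ≠ 0 := Nat.cast_ne_zero.mpr (by omega)
    exact mul_ne_zero had this

lemma dq_leadingCoeff (d : ℕ) (a : ℕ → ℂ → ℂ) (t₀ : ℂ) (hd : 1 ≤ d) (had : a d t₀ ≠ 0) :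
    (Polynomial.derivative (qpoly d a t₀)).leadingCoeff = a d t₀ * d := by
  rw [leadingCoeff, dq_natDegree d a t₀ hd had, dq_coeff d a t₀ hd]

lemma dq_ne_zero (d : ℕ) (a : ℕ → ℂ → ℂ) (t₀ : ℂ) (hd : 1 ≤ d) (had : a d t₀ ≠ 0) :
    Polynomial.derivative (qpoly d a t₀) ≠ 0 := by
  intro h
  have := dq_coeff d a t₀ hd
  rw [h, coeff_zero] at this
  have hc : (d : ℂ) ≠ 0 := Nat.cast_ne_zero.mpr (by omega)
  exact mul_ne_zero had hc this.symm

lemma dq_eval_zero (d : ℕ) (a : ℕ → ℂ → ℂ) (t₀ : ℂ) (hd : 1 ≤ d) :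
    (Polynomial.derivative (qpoly d a t₀)).eval 0 = a 1 t₀ := by
  rw [← coeff_zero_eq_eval_zero, coeff_derivative, qpoly_coeff]
  simp [hd]

lemma deriv_f_eq (d : ℕ) (a : ℕ → ℂ → ℂ) (t₀ : ℂ) (f : ℂ → ℂ → ℂ)
    (hf : ∀ t z, f t z = ∑ i ∈ Finset.range (d + 1), a i t * z ^ i) (w : ℂ) :
    deriv (f t₀) w = (Polynomial.derivative (qpoly d a t₀)).eval w := by
  have hfun : f t₀ = fun x => (qpoly d a t₀).eval x := by
    funext x
    rw [qpoly_eval d a t₀ f hf]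
  rw [hfun]
  exact Polynomial.deriv _

lemma spoly_derivative (d : ℕ) (a : ℕ → ℂ → ℂ) (t₀ v : ℂ) :
    Polynomial.derivative (qpoly d a t₀ - C v) = Polynomial.derivative (qpoly d a t₀) := by
  rw [derivative_sub, derivative_C, sub_zero]

/-- Lemma 5.2: away from the critical set, images of vertical disks
contain vertical disks of radius comparable to `η ^ (2d-2) * r`. -/
theorem statement11 (δ : ℝ) (hδ : 0 < δ) (lam : ℂ) (hlam0 : 0 < ‖lam‖) (hlam1 : ‖lam‖ < 1)
    (d : ℕ) (a : ℕ → ℂ → ℂ)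
    (ha : ∀ i, i ≤ d → DifferentiableOn ℂ (a i) (Metric.ball (0 : ℂ) δ))
    (had : a d 0 ≠ 0)
    (f : ℂ → ℂ → ℂ) (hf : ∀ t z, f t z = ∑ i ∈ Finset.range (d + 1), a i t * z ^ i)
    (P : ℂ × ℂ → ℂ × ℂ) (hP : ∀ x : ℂ × ℂ, P x = (lam * x.1, f x.1 x.2))
    (p : ℂ → ℂ) (hp : ∀ z, p z = f 0 z)
    (R : ℝ) (hR0 : 0 < R)
    (hR : ∀ t ∈ Metric.ball (0 : ℂ) δ, ∀ z : ℂ, R < ‖z‖ → 2 * ‖z‖ ≤ ‖f t z‖) :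
    ∃ c₀ c δ₂ : ℝ, 0 < c ∧ c < c₀ ∧ 0 < δ₂ ∧ δ₂ ≤ δ ∧
      (∀ t₀ : ℂ, ‖t₀‖ < δ₂ → ∀ z : ℂ, ∀ r : ℝ, 0 < r →
        ∃ r' : ℝ, c₀ * r ^ d ≤ r' ∧
          (({lam * t₀} : Set ℂ) ×ˢ Metric.ball (f t₀ z) r') ⊆
            P '' (({t₀} : Set ℂ) ×ˢ Metric.ball z r)) ∧
      ∀ t₀ : ℂ, ‖t₀‖ < δ₂ → ∀ z : ℂ, ∀ r : ℝ, 0 < r →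
        Metric.ball z r ⊆ Metric.ball (0 : ℂ) R →
        ∀ η : ℝ, 0 < η →
          (∀ w ∈ Metric.ball z r, ∀ cr : ℂ, deriv (f t₀) cr = 0 → η ≤ dist w cr) →
          ∃ r' : ℝ, c * η ^ (2 * d - 2) * r ≤ r' ∧
            (({lam * t₀} : Set ℂ) ×ˢ Metric.ball (f t₀ z) r') ⊆
              P '' (({t₀} : Set ℂ) ×ˢ Metric.ball z r) := by
  -- d ≥ 1
  have hd1 : 1 ≤ d := by
    by_contra hcon
    have hd0 : d = 0 := by omega
    set x₀ : ℝ := max R ‖a 0 0‖ + 1 with hx₀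
    have hx₀pos : 0 < x₀ := by
      have := le_max_left R ‖a 0 0‖
      simp only [hx₀]; linarith
    have hz₀ : ‖(x₀ : ℂ)‖ = x₀ := by
      rw [Complex.norm_real, Real.norm_eq_abs, abs_of_pos hx₀pos]
    have h1 := hR 0 (mem_ball_self hδ) (x₀ : ℂ)
      (by rw [hz₀]; have := le_max_left R ‖a 0 0‖; simp only [hx₀]; linarith)
    rw [hf, hd0] at h1
    simp only [zero_add, Finset.range_one, Finset.sum_singleton, pow_zero, mul_one] at h1
    rw [hz₀] at h1
    have h2 := le_max_right R ‖a 0 0‖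
    simp only [hx₀] at h1
    linarith
  -- constants
  set A₀ : ℝ := ‖a d 0‖ / 2 with hA₀def
  have hA₀ : 0 < A₀ := by
    have : 0 < ‖a d 0‖ := norm_pos_iff.mpr had
    simp only [hA₀def]; linarith
  set M₁ : ℝ := ‖a 1 0‖ + 1 with hM₁def
  have hM₁pos : 0 < M₁ := by positivity
  have hcontd : ContinuousAt (a d) 0 :=
    ((ha d le_rfl).continuousOn).continuousAt (isOpen_ball.mem_nhds (mem_ball_self hδ))
  have hcont1 : ContinuousAt (a 1) 0 :=
    ((ha 1 hd1).continuousOn).continuousAt (isOpen_ball.mem_nhds (mem_ball_self hδ))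
  obtain ⟨δa, hδa, hδaP⟩ := Metric.continuousAt_iff.mp hcontd A₀ hA₀
  obtain ⟨δb, hδb, hδbP⟩ := Metric.continuousAt_iff.mp hcont1 1 one_pos
  set δ₂ : ℝ := min δ (min δa δb) with hδ₂def
  have hδ₂pos : 0 < δ₂ := by
    simp only [hδ₂def, lt_min_iff]
    exact ⟨hδ, hδa, hδb⟩
  have hδ₂le : δ₂ ≤ δ := min_le_left _ _
  have hAd : ∀ t₀ : ℂ, ‖t₀‖ < δ₂ → A₀ ≤ ‖a d t₀‖ := by
    intro t₀ ht₀
    have h1 : dist t₀ 0 < δa := by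
      rw [dist_zero_right]
      exact lt_of_lt_of_le ht₀ (le_trans (min_le_right _ _) (min_le_left _ _))
    have h2 := hδaP h1
    rw [dist_eq_norm] at h2
    have h3 := norm_sub_norm_le (a d 0) (a d t₀)
    rw [norm_sub_rev] at h3
    simp only [hA₀def] at *
    linarith
  have hM₁ : ∀ t₀ : ℂ, ‖t₀‖ < δ₂ → ‖a 1 t₀‖ ≤ M₁ := by
    intro t₀ ht₀
    have h1 : dist t₀ 0 < δb := by
      rw [dist_zero_right]
      exact lt_of_lt_of_le ht₀ (le_trans (min_le_right _ _) (min_le_right _ _))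
    have h2 := hδbP h1
    rw [dist_eq_norm] at h2
    have h3 := norm_sub_norm_le (a 1 t₀) (a 1 0)
    simp only [hM₁def]
    linarith
  have had' : ∀ t₀ : ℂ, ‖t₀‖ < δ₂ → a d t₀ ≠ 0 := by
    intro t₀ ht₀
    have := hAd t₀ ht₀
    intro h
    rw [h, norm_zero] at this
    linarith
  set Q : ℝ := M₁ / A₀ with hQdef
  have hQpos : 0 < Q := by positivity
  set E : ℝ := R + (max Q 1 + 1) with hEdef
  have hE1 : 1 ≤ E := by
    have := le_max_right Q 1
    simp only [hEdef]; linarith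
  have hEpow : 1 ≤ E ^ (d - 1) := one_le_pow₀ hE1
  set c : ℝ := A₀ / (2 * E ^ (d - 1)) with hcdef
  have hcpos : 0 < c := by positivity
  have hclt : c < A₀ := by
    rw [hcdef, div_lt_iff₀ (by positivity)]
    nlinarith
  refine ⟨A₀, c, δ₂, hcpos, hclt, hδ₂pos, hδ₂le, ?_, ?_⟩
  · -- first conjunct
    intro t₀ ht₀ z r hr
    refine ⟨A₀ * r ^ d, le_refl _, ?_⟩
    rintro ⟨w1, v⟩ ⟨hw1, hv⟩
    simp only [Set.mem_singleton_iff] at hw1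
    have hadt := had' t₀ ht₀
    have hsne := spoly_ne_zero d a t₀ v hd1 hadt
    have hlt : ‖(qpoly d a t₀ - C v).eval z‖
        < ‖(qpoly d a t₀ - C v).leadingCoeff‖ * r ^ (qpoly d a t₀ - C v).natDegree := by
      rw [spoly_leadingCoeff d a t₀ v hd1 hadt, spoly_natDegree d a t₀ v hd1 hadt]
      have h1 : (qpoly d a t₀ - C v).eval z = f t₀ z - v := by
        rw [eval_sub, eval_C, qpoly_eval d a t₀ f hf]
      rw [h1]
      have h2 : ‖f t₀ z - v‖ < A₀ * r ^ d := by
        have := mem_ball.mp hv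
        rwa [dist_eq_norm, norm_sub_rev] at this
      have h3 : A₀ * r ^ d ≤ ‖a d t₀‖ * r ^ d :=
        mul_le_mul_of_nonneg_right (hAd t₀ ht₀) (by positivity)
      linarith
    obtain ⟨γ, hγ0, hγr⟩ := key1 _ z r hr hsne hlt
    have hfγ : f t₀ γ = v := by
      rw [eval_sub, eval_C, qpoly_eval d a t₀ f hf, sub_eq_zero] at hγ0
      exact hγ0
    refine ⟨(t₀, γ), ⟨rfl, ?_⟩, ?_⟩
    · exact mem_ball.mpr (by rw [dist_eq_norm, norm_sub_rev]; exact hγr)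
    · rw [hP]
      show (lam * t₀, f t₀ γ) = (w1, v)
      rw [hw1, hfγ]
  · -- second conjunct
    intro t₀ ht₀ z r hr hball η hη hcrit
    have hadt := had' t₀ ht₀
    have hA := hAd t₀ ht₀
    have hq'ne := dq_ne_zero d a t₀ hd1 hadt
    -- lower bound for the derivative at z
    have hderlow : (d : ℝ) * (A₀ * η ^ (d - 1))
        ≤ ‖(Polynomial.derivative (qpoly d a t₀)).eval z‖ := by
      have hroots : ∀ cc : ℂ, (Polynomial.derivative (qpoly d a t₀)).eval cc = 0 →
          η ≤ ‖z - cc‖ := by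
        intro cc hcc
        have := hcrit z (mem_ball_self hr) cc (by rw [deriv_f_eq d a t₀ f hf]; exact hcc)
        rwa [dist_eq_norm] at this
      have h1 := evalNormLower _ hq'ne z η hη.le hroots
      rw [dq_leadingCoeff d a t₀ hd1 hadt, dq_natDegree d a t₀ hd1 hadt, norm_mul] at h1
      have hnd : ‖(d : ℂ)‖ = (d : ℝ) := by
        simp
      rw [hnd] at h1
      have hηp : (0:ℝ) ≤ η ^ (d - 1) := by positivity
      nlinarith [mul_le_mul_of_nonneg_right hA (by positivity : (0:ℝ) ≤ (d:ℝ) * η ^ (d - 1))]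
    -- η is bounded: c * η^(2d-2) ≤ A₀ * η^(d-1)
    have hcereal : c * η ^ (d - 1) ≤ A₀ := by
      by_cases hd2 : d = 1
      · subst hd2
        simp only [Nat.sub_self, pow_zero, mul_one]
        exact hclt.le
      · have hd2' : 2 ≤ d := by omega
        -- η ≤ E
        have hηE : η ≤ E := by
          have hQb : ‖(Polynomial.derivative (qpoly d a t₀)).eval 0‖
              ≤ Q * ‖(Polynomial.derivative (qpoly d a t₀)).leadingCoeff‖ := by
            rw [dq_eval_zero d a t₀ hd1, dq_leadingCoeff d a t₀ hd1 hadt, norm_mul]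
            have hnd : ‖(d : ℂ)‖ = (d : ℝ) := by simp
            rw [hnd]
            have h1 := hM₁ t₀ ht₀
            have h2 : (1:ℝ) ≤ (d:ℝ) := by exact_mod_cast hd1
            have h3 : A₀ * 1 ≤ ‖a d t₀‖ * (d:ℝ) := by nlinarith [norm_nonneg (a d t₀)]
            calc ‖a 1 t₀‖ ≤ M₁ := h1
              _ = Q * A₀ := by rw [hQdef]; field_simp
              _ = Q * (A₀ * 1) := by ring
              _ ≤ Q * (‖a d t₀‖ * (d:ℝ)) := mul_le_mul_of_nonneg_left h3 hQpos.le
          obtain ⟨cr, hcr0, hcrB⟩ := existsSmallRoot (Polynomial.derivative (qpoly d a t₀))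
            (by rw [dq_natDegree d a t₀ hd1 hadt]; omega) Q hQb
          have h1 := hcrit z (mem_ball_self hr) cr
            (by rw [deriv_f_eq d a t₀ f hf]; exact hcr0)
          have h2 : dist z cr ≤ ‖z‖ + ‖cr‖ := by
            rw [dist_eq_norm]
            exact (norm_sub_le _ _)
          have h3 : ‖z‖ < R := mem_ball_zero_iff.mp (hball (mem_ball_self hr))
          simp only [hEdef]
          linarith
        have hpowle : η ^ (d - 1) ≤ E ^ (d - 1) := pow_le_pow_left₀ hη.le hηE _
        have hc_eq : c * E ^ (d - 1) = A₀ / 2 := by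
          rw [hcdef]
          field_simp
        calc c * η ^ (d - 1) ≤ c * E ^ (d - 1) :=
              mul_le_mul_of_nonneg_left hpowle hcpos.le
          _ = A₀ / 2 := hc_eq
          _ ≤ A₀ := by linarith
    have hηE2 : c * η ^ (2 * d - 2) ≤ A₀ * η ^ (d - 1) := by
      have hsplit : η ^ (2 * d - 2) = η ^ (d - 1) * η ^ (d - 1) := by
        rw [← pow_add]
        congr 1
        omega
      rw [hsplit]
      have hηp : (0:ℝ) ≤ η ^ (d - 1) := by positivity
      calc c * (η ^ (d - 1) * η ^ (d - 1)) = c * η ^ (d - 1) * η ^ (d - 1) := by ring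
        _ ≤ A₀ * η ^ (d - 1) := mul_le_mul_of_nonneg_right hcereal hηp
    refine ⟨c * η ^ (2 * d - 2) * r, le_refl _, ?_⟩
    rintro ⟨w1, v⟩ ⟨hw1, hv⟩
    simp only [Set.mem_singleton_iff] at hw1
    have hsne := spoly_ne_zero d a t₀ v hd1 hadt
    have hB : (0:ℝ) < (d : ℝ) * (A₀ * η ^ (d - 1)) := by
      have h2 : (1:ℝ) ≤ (d:ℝ) := by exact_mod_cast hd1
      positivity
    have hder : (d : ℝ) * (A₀ * η ^ (d - 1))
        ≤ ‖(Polynomial.derivative (qpoly d a t₀ - C v)).eval z‖ := by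
      rw [spoly_derivative]
      exact hderlow
    have hlt : (((qpoly d a t₀ - C v).natDegree : ℕ) : ℝ) * ‖(qpoly d a t₀ - C v).eval z‖
        < ((d : ℝ) * (A₀ * η ^ (d - 1))) * r := by
      rw [spoly_natDegree d a t₀ v hd1 hadt]
      have h1 : (qpoly d a t₀ - C v).eval z = f t₀ z - v := by
        rw [eval_sub, eval_C, qpoly_eval d a t₀ f hf]
      rw [h1]
      have h2 : ‖f t₀ z - v‖ < c * η ^ (2 * d - 2) * r := by
        have := mem_ball.mp hv
        rwa [dist_eq_norm, norm_sub_rev] at this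
      have h3 : c * η ^ (2 * d - 2) * r ≤ (A₀ * η ^ (d - 1)) * r :=
        mul_le_mul_of_nonneg_right hηE2 hr.le
      have h4 : (1:ℝ) ≤ (d:ℝ) := by exact_mod_cast hd1
      have h6 : ‖f t₀ z - v‖ < (A₀ * η ^ (d - 1)) * r := lt_of_lt_of_le h2 h3
      have hd0 : (0:ℝ) < (d:ℝ) := by linarith
      calc (d:ℝ) * ‖f t₀ z - v‖ < (d:ℝ) * ((A₀ * η ^ (d - 1)) * r) :=
            mul_lt_mul_of_pos_left h6 hd0
        _ = ((d : ℝ) * (A₀ * η ^ (d - 1))) * r := by ring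
    obtain ⟨γ, hγ0, hγr⟩ := key2 _ z r _ hr hsne hB hder hlt
    have hfγ : f t₀ γ = v := by
      rw [eval_sub, eval_C, qpoly_eval d a t₀ f hf, sub_eq_zero] at hγ0
      exact hγ0
    refine ⟨(t₀, γ), ⟨rfl, ?_⟩, ?_⟩
    · exact mem_ball.mpr (by rw [dist_eq_norm, norm_sub_rev]; exact hγr)
    · rw [hP]
      show (lam * t₀, f t₀ γ) = (w1, v)
      rw [hw1, hfγ]
end
end
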